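/- arXiv:2006.03684 — 10 statements merged into one kernel-verified Lean document; each statement's English description precedes it below -/
import Mathlib

section
/- Let ε ≥ 0 and δ ∈ [0,1]. Define π₀ : ℕ → ℝ by π₀(0) = 0 and π₀(n+1) = min(e^ε·π₀(n) + δ, 1 − e^{−ε}·(1 − π₀(n) − δ), 1). If π : ℕ → [0,1] is any function with π(0) = 0 satisfying π(n+1) ≤ e^ε·π(n) + δ and 1 − π(n) ≤ e^ε·(1 − π(n+1)) + δ for all n, then π(n) ≤ π₀(n) for all n ∈ ℕ. -/
open Real

lemma le_one_sub_exp_neg_mul_of_one_sub_le {ε δ a b : ℝ}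
    (h : 1 - a ≤ exp ε * (1 - b) + δ) : b ≤ 1 - exp (-ε) * (1 - a - δ) := by
  have h' : exp (-ε) * (1 - a - δ) ≤ exp (-ε) * (exp ε * (1 - b)) :=
    mul_le_mul_of_nonneg_left (by linarith) (exp_pos _).le
  rw [← mul_assoc, ← exp_add, neg_add_cancel, exp_zero, one_mul] at h'
  linarith

/-- Both bounds of the greedy step are monotone in the previous value. -/
lemma le_min_step_of_le {ε δ a b c : ℝ} (hac : a ≤ c)
    (hA : b ≤ exp ε * a + δ) (hB : 1 - a ≤ exp ε * (1 - b) + δ) (hb : b ≤ 1) :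
    b ≤ min (min (exp ε * c + δ) (1 - exp (-ε) * (1 - c - δ))) 1 := by
  have hAc : b ≤ exp ε * c + δ := hA.trans (by gcongr)
  have hBc : b ≤ 1 - exp (-ε) * (1 - c - δ) :=
    (le_one_sub_exp_neg_mul_of_one_sub_le hB).trans (by gcongr)
  exact le_min (le_min hAc hBc) hb

theorem pi_opt_maximal_general
    (ε δ : ℝ)
    (π₀ : ℕ → ℝ) (h0 : π₀ 0 = 0)
    (hrec : ∀ n, π₀ (n + 1) =
      min (min (exp ε * π₀ n + δ) (1 - exp (-ε) * (1 - π₀ n - δ))) 1)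
    (f : ℕ → ℝ) (hf1 : ∀ n, f n ≤ 1) (hfz : f 0 = 0)
    (hA : ∀ n, f (n + 1) ≤ exp ε * f n + δ)
    (hB : ∀ n, 1 - f n ≤ exp ε * (1 - f (n + 1)) + δ) :
    ∀ n, f n ≤ π₀ n := by
  intro n
  induction n with
  | zero => rw [h0, hfz]
  | succ n ih => rw [hrec n]; exact le_min_step_of_le ih (hA n) (hB n) (hf1 _)

theorem pi_opt_maximal
    (ε δ : ℝ) (hε : 0 ≤ ε) (hδ0 : 0 ≤ δ) (hδ1 : δ ≤ 1)
    (π₀ : ℕ → ℝ) (h0 : π₀ 0 = 0)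
    (hrec : ∀ n, π₀ (n + 1) =
      min (min (exp ε * π₀ n + δ) (1 - exp (-ε) * (1 - π₀ n - δ))) 1)
    (f : ℕ → ℝ) (hf0 : ∀ n, 0 ≤ f n) (hf1 : ∀ n, f n ≤ 1) (hfz : f 0 = 0)
    (hA : ∀ n, f (n + 1) ≤ exp ε * f n + δ)
    (hB : ∀ n, 1 - f n ≤ exp ε * (1 - f (n + 1)) + δ) :
    ∀ n, f n ≤ π₀ n :=
  pi_opt_maximal_general ε δ π₀ h0 hrec f hf1 hfz hA hB
end

section
/- Let ε > 0 and δ > 0. Define π₀ : ℕ → ℝ by π₀(0) = 0 and π₀(n+1) = min(e^ε·π₀(n) + δ, 1 − e^{−ε}·(1 − π₀(n) − δ), 1). For every n ≥ 1 with π₀(n) ≠ 1, one has π₀(n) − π₀(n−1) ≥ e^{−ε}·δ. Consequently there exists a finite N such that π₀(n) = 1 for all n ≥ N. -/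
/-!
The recursion is `π₀ (n + 1) = piOptStep ε δ (π₀ n)`. The step map sends `[0, 1]` into itself, and
on `[0, 1]` it dominates `min (x + e^{-ε} δ) 1`: the first branch because `e^ε ≥ 1 ≥ e^{-ε}`, the
second because it exceeds `x + e^{-ε} δ` by `(1 - x)(1 - e^{-ε}) ≥ 0`. So every step below `1`
gains at least `e^{-ε} δ`, and after `N ≥ 1 / (e^{-ε} δ)` steps the sequence is stuck at `1`.
-/

open Real Set

noncomputable def piOptStep (ε δ x : ℝ) : ℝ :=
  min (min (exp ε * x + δ) (1 - exp (-ε) * (1 - x - δ))) 1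

section piOptStep

variable {ε δ x : ℝ}

theorem piOptStep_le_one : piOptStep ε δ x ≤ 1 := min_le_right _ _

theorem mapsTo_piOptStep_Icc (hε : 0 ≤ ε) (hδ : 0 ≤ δ) :
    MapsTo (piOptStep ε δ) (Icc 0 1) (Icc 0 1) := by
  rintro x ⟨hx0, -⟩
  have hexp : exp (-ε) ≤ 1 := exp_le_one_iff.2 (neg_nonpos.2 hε)
  refine ⟨le_min (le_min (by positivity) ?_) zero_le_one, piOptStep_le_one⟩
  nlinarith [exp_pos (-ε)]

theorem min_add_le_piOptStep (hε : 0 ≤ ε) (hδ : 0 ≤ δ) (hx : x ∈ Icc 0 1) :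
    min (x + exp (-ε) * δ) 1 ≤ piOptStep ε δ x := by
  have hexp : exp (-ε) ≤ 1 := exp_le_one_iff.2 (neg_nonpos.2 hε)
  have hexp' : 1 ≤ exp ε := one_le_exp hε
  refine min_le_min_right 1 (le_min ?_ ?_)
  · nlinarith [hx.1]
  · nlinarith [hx.2]

end piOptStep

section GainSequence

variable {u : ℕ → ℝ} {c : ℝ}

theorem min_mul_le_of_min_add_le (hc : 0 ≤ c) (h0 : 0 ≤ u 0)
    (hstep : ∀ n, min (u n + c) 1 ≤ u (n + 1)) (n : ℕ) : min (n * c) 1 ≤ u n := by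
  induction n with
  | zero => simpa using h0
  | succ n ih =>
    refine le_trans ?_ (hstep n)
    push_cast
    rcases min_cases (n * c) 1 with ⟨h, -⟩ | ⟨h, -⟩ <;> rw [h] at ih
    · exact min_le_min_right 1 (by linarith)
    · exact (min_le_right _ _).trans (le_min (by linarith) le_rfl)

theorem exists_forall_ge_eq_one_of_min_add_le (hc : 0 < c) (h0 : 0 ≤ u 0) (hle : ∀ n, u n ≤ 1)
    (hstep : ∀ n, min (u n + c) 1 ≤ u (n + 1)) : ∃ N : ℕ, ∀ n ≥ N, u n = 1 := by
  obtain ⟨N, hN⟩ := exists_nat_ge (1 / c)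
  refine ⟨N, fun n hn => (hle n).antisymm ?_⟩
  have hnc : 1 ≤ n * c := by
    rw [div_le_iff₀ hc] at hN
    exact hN.trans (mul_le_mul_of_nonneg_right (by exact_mod_cast hn) hc.le)
  simpa [min_eq_right hnc] using min_mul_le_of_min_add_le hc.le h0 hstep n

end GainSequence

theorem pi_opt_strict_increase_and_reaches_one
    (ε δ : ℝ) (hε : 0 < ε) (hδ : 0 < δ)
    (π₀ : ℕ → ℝ) (h0 : π₀ 0 = 0)
    (hrec : ∀ n, π₀ (n + 1) =
      min (min (exp ε * π₀ n + δ) (1 - exp (-ε) * (1 - π₀ n - δ))) 1) :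
    (∀ n : ℕ, 1 ≤ n → π₀ n ≠ 1 → exp (-ε) * δ ≤ π₀ n - π₀ (n - 1)) ∧
    ∃ N : ℕ, ∀ n ≥ N, π₀ n = 1 := by
  have hmem (n : ℕ) : π₀ n ∈ Icc 0 1 := by
    induction n with
    | zero => simp [h0]
    | succ n ih => exact hrec n ▸ mapsTo_piOptStep_Icc hε.le hδ.le ih
  have hstep (n : ℕ) : min (π₀ n + exp (-ε) * δ) 1 ≤ π₀ (n + 1) :=
    hrec n ▸ min_add_le_piOptStep hε.le hδ.le (hmem n)
  refine ⟨fun n hn hne => ?_,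
    exists_forall_ge_eq_one_of_min_add_le (by positivity) h0.ge (fun n => (hmem n).2) hstep⟩
  obtain ⟨m, rfl⟩ := Nat.exists_eq_add_of_le' hn
  have hgain := (min_le_iff.1 (hstep m)).resolve_right (not_le.2 ((hmem _).2.lt_of_ne hne))
  rw [Nat.add_sub_cancel]
  linarith
end

section
/- Let ε > 0, δ ∈ (0,1), and define n₁ = 1 + ⌊(1/ε)·ln((e^ε + 2δ − 1)/((e^ε + 1)δ))⌋. Define π₀ : ℕ → ℝ by π₀(0) = 0 and π₀(n+1) = min(e^ε·π₀(n) + δ, 1 − e^{−ε}·(1 − π₀(n) − δ), 1). Then for all n with 0 ≤ n ≤ n₁, π₀(n) = δ·(e^{nε} − 1)/(e^ε − 1). -/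
/-!
Write `E = exp ε`. As long as `p := π₀ n` satisfies `0 ≤ p` and `p (E + 1) ≤ 1 - δ`, the first
branch `E p + δ` of the recursion is the minimum, so `π₀` follows the affine recursion
`p ↦ E p + δ`, whose solution from `0` is `δ (Eⁿ - 1) / (E - 1)`. For this closed form the bound
`p (E + 1) ≤ 1 - δ` is equivalent to `(E + 1) δ Eⁿ ≤ E + 2δ - 1`, i.e. to
`n ε ≤ log ((E + 2δ - 1) / ((E + 1) δ))`, which holds for every `n < n₁`.
-/

open Real

lemma min_eq_affine_of_mul_le {E δ p : ℝ} (hE : 1 ≤ E) (hp : 0 ≤ p) (h : p * (E + 1) ≤ 1 - δ) :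
    min (min (E * p + δ) (1 - E⁻¹ * (1 - p - δ))) 1 = E * p + δ := by
  have hE0 : 0 < E := by linarith
  have h_le_second : E * p + δ ≤ 1 - E⁻¹ * (1 - p - δ) := by
    have key : p * (E + 1) * (E - 1) ≤ (1 - δ) * (E - 1) :=
      mul_le_mul_of_nonneg_right h (by linarith)
    rw [← mul_le_mul_iff_of_pos_left hE0, mul_sub, ← mul_assoc, mul_inv_cancel₀ hE0.ne']
    nlinarith
  have h_le_one : E * p + δ ≤ 1 := by nlinarith
  rw [min_eq_left h_le_second, min_eq_left h_le_one]

lemma affine_step_geom_closed_form {E δ x : ℝ} (hE : E ≠ 1) :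
    E * (δ * (x - 1) / (E - 1)) + δ = δ * (E * x - 1) / (E - 1) := by
  have : E - 1 ≠ 0 := sub_ne_zero.mpr hE
  field_simp
  ring

lemma geom_closed_form_mul_le {E δ x : ℝ} (hE : 1 < E)
    (hx : (E + 1) * δ * x ≤ E + 2 * δ - 1) :
    δ * (x - 1) / (E - 1) * (E + 1) ≤ 1 - δ := by
  rw [div_mul_eq_mul_div, div_le_iff₀ (by linarith)]
  linear_combination hx

lemma natCast_le_of_lt_one_add_floor {n n₁ : ℕ} {x : ℝ} (h : (n₁ : ℤ) = 1 + ⌊x⌋)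
    (hn : n < n₁) : (n : ℝ) ≤ x := by
  have : (n : ℤ) ≤ ⌊x⌋ := by omega
  exact_mod_cast Int.le_floor.mp this

lemma exp_mul_le_of_le_one_div_mul_log {t ε A : ℝ} (hε : 0 < ε) (hA : 0 < A)
    (h : t ≤ 1 / ε * log A) : exp (t * ε) ≤ A := by
  rw [one_div_mul_eq_div, le_div_iff₀ hε] at h
  exact (le_log_iff_exp_le hA).mp h

theorem pi_opt_closed_form_first_phase_general
    (ε δ : ℝ) (hε : 0 < ε) (hδ0 : 0 < δ)
    (π₀ : ℕ → ℝ) (h0 : π₀ 0 = 0)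
    (hrec : ∀ n, π₀ (n + 1) =
      min (min (exp ε * π₀ n + δ) (1 - exp (-ε) * (1 - π₀ n - δ))) 1)
    (n₁ : ℕ)
    (hn₁ : (n₁ : ℤ) = 1 + ⌊(1 / ε) * Real.log ((exp ε + 2 * δ - 1) / ((exp ε + 1) * δ))⌋) :
    ∀ n : ℕ, n ≤ n₁ → π₀ n = δ * (exp (n * ε) - 1) / (exp ε - 1) := by
  have hE : 1 < exp ε := one_lt_exp_iff.mpr hε
  have hA : 0 < (exp ε + 2 * δ - 1) / ((exp ε + 1) * δ) := by
    apply div_pos <;> nlinarith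
  intro n
  induction n with
  | zero => intro _; simp [h0]
  | succ n ih =>
    intro hn
    have hx : exp (n * ε) ≤ (exp ε + 2 * δ - 1) / ((exp ε + 1) * δ) :=
      exp_mul_le_of_le_one_div_mul_log hε hA (natCast_le_of_lt_one_add_floor hn₁ hn)
    have hp_nonneg : 0 ≤ δ * (exp (n * ε) - 1) / (exp ε - 1) := by
      have : 1 ≤ exp (n * ε) := one_le_exp (by positivity)
      apply div_nonneg _ (by linarith)
      nlinarith
    have hp_bound := geom_closed_form_mul_le hE
      ((le_div_iff₀' (by positivity)).mp hx)
    rw [hrec, ih (by omega), exp_neg, min_eq_affine_of_mul_le hE.le hp_nonneg hp_bound,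
      affine_step_geom_closed_form hE.ne', ← exp_add]
    push_cast
    ring_nf

theorem pi_opt_closed_form_first_phase
    (ε δ : ℝ) (hε : 0 < ε) (hδ0 : 0 < δ) (hδ1 : δ < 1)
    (π₀ : ℕ → ℝ) (h0 : π₀ 0 = 0)
    (hrec : ∀ n, π₀ (n + 1) =
      min (min (exp ε * π₀ n + δ) (1 - exp (-ε) * (1 - π₀ n - δ))) 1)
    (n₁ : ℕ)
    (hn₁ : (n₁ : ℤ) = 1 + ⌊(1 / ε) * Real.log ((exp ε + 2 * δ - 1) / ((exp ε + 1) * δ))⌋) :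
    ∀ n : ℕ, n ≤ n₁ → π₀ n = δ * (exp (n * ε) - 1) / (exp ε - 1) :=
  pi_opt_closed_form_first_phase_general ε δ hε hδ0 π₀ h0 hrec n₁ hn₁
end

section
/- Let ε > 0, δ ∈ (0,1), n₁ = 1 + ⌊(1/ε)·ln((e^ε + 2δ − 1)/((e^ε + 1)δ))⌋, and n₂ = n₁ + ⌊(1/ε)·ln(1 + ((e^ε − 1)/δ)·(1 − π₀(n₁)))⌋, where π₀ is defined by π₀(0) = 0 and π₀(n+1) = min(e^ε·π₀(n) + δ, 1 − e^{−ε}·(1 − π₀(n) − δ), 1). Then for all n with n₁ ≤ n ≤ n₂, writing m = n − n₁, π₀(n) = (1 − e^{−mε})·(1 + δ/(e^ε − 1)) + e^{−mε}·π₀(n₁). -/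
/-!
Write `c = exp ε`. As long as `π₀ n * (c + 1) ≤ 1 - δ`, the first branch `c * x + δ` of the minimum
is active, which gives `π₀ k = δ * (c ^ k - 1) / (c - 1)`; `n₁` is the first index where this
threshold is crossed. From then on the middle branch is active: it is the affine contraction
`x ↦ L + c⁻¹ * (x - L)` with fixed point `L = 1 + δ / (c - 1)`, so the iterates increase towards
`L` (staying above the threshold) and remain `≤ 1 - δ` exactly while
`c ^ (m + 1) * δ ≤ (c - 1) * (L - π₀ n₁)`, i.e. for `n₁ + m < n₂`.
-/

open Real

noncomputable def optStep (c δ x : ℝ) : ℝ :=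
  min (min (c * x + δ) (1 - c⁻¹ * (1 - x - δ))) 1

section OptStep

variable {c δ x : ℝ}

theorem optStep_le_one : optStep c δ x ≤ 1 := min_le_right _ _

theorem linear_branch_sub_contraction_branch (hc : c ≠ 0) :
    c * x + δ - (1 - c⁻¹ * (1 - x - δ)) = (c - 1) * (x * (c + 1) - (1 - δ)) / c := by
  field_simp; ring

theorem optStep_eq_of_mul_le (hc : 1 ≤ c) (hx : 0 ≤ x) (h : x * (c + 1) ≤ 1 - δ) :
    optStep c δ x = c * x + δ := by
  have hc0 : 0 < c := by linarith
  have hlin : c * x + δ ≤ 1 - c⁻¹ * (1 - x - δ) := by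
    rw [← sub_nonpos, linear_branch_sub_contraction_branch hc0.ne']
    exact div_nonpos_of_nonpos_of_nonneg
      (mul_nonpos_of_nonneg_of_nonpos (by linarith) (by linarith)) hc0.le
  rw [optStep, min_eq_left hlin, min_eq_left (by nlinarith)]

theorem optStep_eq_of_le_mul (hc : 1 ≤ c) (h : 1 - δ ≤ x * (c + 1)) (hx : x ≤ 1 - δ) :
    optStep c δ x = 1 - c⁻¹ * (1 - x - δ) := by
  have hc0 : 0 < c := by linarith
  have hcon : 1 - c⁻¹ * (1 - x - δ) ≤ c * x + δ := by
    rw [← sub_nonneg, linear_branch_sub_contraction_branch hc0.ne']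
    exact div_nonneg (mul_nonneg (by linarith) (by linarith)) hc0.le
  have hle : 1 - c⁻¹ * (1 - x - δ) ≤ 1 := by
    have : 0 ≤ c⁻¹ * (1 - x - δ) := mul_nonneg (inv_nonneg.mpr hc0.le) (by linarith)
    linarith
  rw [optStep, min_eq_right hcon, min_eq_left hle]

theorem firstPhase_mul_le_iff (hc : 1 < c) (k : ℕ) :
    δ * (c ^ k - 1) / (c - 1) * (c + 1) ≤ 1 - δ ↔ c ^ k * ((c + 1) * δ) ≤ c + 2 * δ - 1 := by
  rw [div_mul_eq_mul_div, div_le_iff₀ (by linarith)]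
  constructor <;> intro h <;> nlinarith

theorem iterate_eq_firstPhase (hc : 1 < c) (hδ : 0 ≤ δ) {u : ℕ → ℝ} (h0 : u 0 = 0)
    (hu : ∀ n, u (n + 1) = optStep c δ (u n)) :
    ∀ k, (∀ j < k, c ^ j * ((c + 1) * δ) ≤ c + 2 * δ - 1) → u k = δ * (c ^ k - 1) / (c - 1)
  | 0, _ => by simp [h0]
  | k + 1, hk => by
    have ih := iterate_eq_firstPhase hc hδ h0 hu k fun j hj => hk j (by omega)
    have hnonneg : 0 ≤ u k := by
      rw [ih]
      exact div_nonneg (mul_nonneg hδ (by linarith [one_le_pow₀ (n := k) hc.le])) (by linarith)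
    have hbelow : u k * (c + 1) ≤ 1 - δ :=
      ih ▸ (firstPhase_mul_le_iff hc k).mpr (hk k k.lt_succ_self)
    rw [hu, optStep_eq_of_mul_le hc.le hnonneg hbelow, ih]
    field_simp [(by linarith : c - 1 ≠ 0)]
    ring

theorem contraction_eq_fixedPoint (hc : c ≠ 0) {L : ℝ} (hL : (c - 1) * L = c - 1 + δ) :
    1 - c⁻¹ * (1 - x - δ) = L + c⁻¹ * (x - L) := by
  field_simp
  linear_combination (-1 : ℝ) * hL

theorem iterate_eq_secondPhase (hc : 1 < c) (hδ : 0 ≤ δ) {L : ℝ} (hL : (c - 1) * L = c - 1 + δ)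
    {v : ℕ → ℝ} (hv : ∀ n, v (n + 1) = optStep c δ (v n)) (hthr : 1 - δ ≤ v 0 * (c + 1)) :
    ∀ m, c ^ m * δ ≤ (c - 1) * (L - v 0) → v m = (1 - (c ^ m)⁻¹) * L + (c ^ m)⁻¹ * v 0
  | 0, _ => by simp
  | m + 1, hm => by
    have hc0 : 0 < c := by linarith
    have hc1 : 0 < c - 1 := by linarith
    have hcm : 1 ≤ c ^ m := one_le_pow₀ hc.le
    have hLv : 0 ≤ L - v 0 := nonneg_of_mul_nonneg_right (hm.trans' (by positivity)) hc1
    have hmono : c ^ m * δ ≤ c ^ (m + 1) * δ :=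
      mul_le_mul_of_nonneg_right (pow_le_pow_right₀ hc.le m.le_succ) hδ
    have ih := iterate_eq_secondPhase hc hδ hL hv hthr m (hmono.trans hm)
    set a := (c ^ m)⁻¹
    have ha : a ≤ 1 := inv_le_one_of_one_le₀ hcm
    have ha_mul : a * c ^ (m + 1) = c := by
      rw [pow_succ, ← mul_assoc, inv_mul_cancel₀ (by positivity), one_mul]
    have hge : v 0 ≤ v m := by rw [ih]; nlinarith
    have hle : v m ≤ 1 - δ := by
      have : c * δ ≤ (c - 1) * (a * (L - v 0)) := by
        rw [← ha_mul]; nlinarith [inv_nonneg.mpr (zero_le_one.trans hcm)]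
      rw [ih]; nlinarith
    rw [hv, optStep_eq_of_le_mul hc.le (by nlinarith) hle,
      contraction_eq_fixedPoint (by positivity) hL, ih, pow_succ, mul_inv]
    ring

end OptStep

theorem natCast_le_floor_mul_log_iff {ε R : ℝ} (hε : 0 < ε) (hR : 0 < R) (k : ℕ) :
    (k : ℤ) ≤ ⌊(1 / ε) * Real.log R⌋ ↔ exp ε ^ k ≤ R := by
  rw [Int.le_floor, Int.cast_natCast, one_div_mul_eq_div, le_div_iff₀ hε, le_log_iff_exp_le hR,
    exp_nat_mul]

theorem firstPhase_exit_bounds {ε δ : ℝ} (hε : 0 < ε) (hδ0 : 0 < δ) (hδ1 : δ < 1)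
    {u : ℕ → ℝ} (h0 : u 0 = 0) (hu : ∀ n, u (n + 1) = optStep (exp ε) δ (u n)) {N : ℕ}
    (hN : (N : ℤ) = 1 + ⌊(1 / ε) * Real.log ((exp ε + 2 * δ - 1) / ((exp ε + 1) * δ))⌋) :
    1 - δ ≤ u N * (exp ε + 1) ∧ u N ≤ 1 := by
  set c := exp ε
  have hc : 1 < c := one_lt_exp_iff.mpr hε
  have hR : 1 ≤ (c + 2 * δ - 1) / ((c + 1) * δ) := by
    rw [one_le_div (by positivity)]; nlinarith
  have hfloor := natCast_le_floor_mul_log_iff hε (zero_lt_one.trans_le hR)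
  have hNpos : 1 ≤ N := by
    have := Int.floor_nonneg.mpr (mul_nonneg (one_div_pos.mpr hε).le (log_nonneg hR)); omega
  have huN : u N = δ * (c ^ N - 1) / (c - 1) :=
    iterate_eq_firstPhase hc hδ0.le h0 hu N fun j hj =>
      (le_div_iff₀ (by positivity)).mp ((hfloor j).mp (by omega))
  constructor
  · have hexit := (hfloor N).not.mp (by omega)
    rw [le_div_iff₀ (by positivity)] at hexit
    rw [huN]
    exact (not_le.mp ((firstPhase_mul_le_iff hc N).not.mpr hexit)).le
  · obtain ⟨k, rfl⟩ := Nat.exists_eq_add_of_le' hNpos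
    exact (hu k).trans_le optStep_le_one

theorem pi_opt_closed_form_second_phase
    (ε δ : ℝ) (hε : 0 < ε) (hδ0 : 0 < δ) (hδ1 : δ < 1)
    (π₀ : ℕ → ℝ) (h0 : π₀ 0 = 0)
    (hrec : ∀ n, π₀ (n + 1) =
      min (min (exp ε * π₀ n + δ) (1 - exp (-ε) * (1 - π₀ n - δ))) 1)
    (n₁ n₂ : ℕ)
    (hn₁ : (n₁ : ℤ) = 1 + ⌊(1 / ε) * Real.log ((exp ε + 2 * δ - 1) / ((exp ε + 1) * δ))⌋)
    (hn₂ : (n₂ : ℤ) = (n₁ : ℤ) +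
      ⌊(1 / ε) * Real.log (1 + ((exp ε - 1) / δ) * (1 - π₀ n₁))⌋) :
    ∀ n : ℕ, n₁ ≤ n → n ≤ n₂ →
      π₀ n = (1 - exp (-((n - n₁ : ℕ) : ℝ) * ε)) * (1 + δ / (exp ε - 1)) +
        exp (-((n - n₁ : ℕ) : ℝ) * ε) * π₀ n₁ := by
  have hstep : ∀ n, π₀ (n + 1) = optStep (exp ε) δ (π₀ n) := fun n => by
    rw [hrec, exp_neg]; rfl
  obtain ⟨hthr, hle1⟩ := firstPhase_exit_bounds hε hδ0 hδ1 h0 hstep hn₁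
  set c := exp ε
  have hc : 1 < c := one_lt_exp_iff.mpr hε
  have hc1 : c - 1 ≠ 0 := (sub_pos.mpr hc).ne'
  have hS : 1 ≤ 1 + ((c - 1) / δ) * (1 - π₀ n₁) := by
    have : 0 ≤ (c - 1) / δ * (1 - π₀ n₁) :=
      mul_nonneg (div_nonneg (by linarith) hδ0.le) (by linarith)
    linarith
  intro n hn₁n hnn₂
  obtain ⟨m, rfl⟩ := Nat.exists_eq_add_of_le hn₁n
  have hm : c ^ m ≤ 1 + ((c - 1) / δ) * (1 - π₀ n₁) :=
    (natCast_le_floor_mul_log_iff hε (zero_lt_one.trans_le hS) m).mp (by omega)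
  rw [Nat.add_sub_cancel_left, neg_mul, exp_neg, exp_nat_mul]
  refine iterate_eq_secondPhase hc hδ0.le (by field_simp) (v := fun k => π₀ (n₁ + k))
    (fun k => hstep (n₁ + k)) (by simpa using hthr) m ?_
  calc c ^ m * δ ≤ (1 + ((c - 1) / δ) * (1 - π₀ n₁)) * δ := by gcongr
    _ = (c - 1) * (1 + δ / (c - 1) - π₀ n₁) := by field_simp; ring
end

section
/- Let ε > 0, δ ∈ (0,1). With n₁ = 1 + ⌊(1/ε)·ln((e^ε+2δ−1)/((e^ε+1)δ))⌋ and n₂ = n₁ + ⌊(1/ε)·ln(1 + ((e^ε−1)/δ)·(1 − π₀(n₁)))⌋, the recursively defined π₀ satisfies π₀(n) = 1 for all n > n₂. -/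
/-!
Write `E = exp ε`, `c = δ / (E - 1)` and `x* = (1 - δ) / (E + 1)`. Below the crossover point `x*`
the update is `x ↦ E x + δ`, under which `x + c` grows by the factor `E`; above it the update is
`x ↦ min 1 (1 - (1 - x - δ) / E)`, under which the deficit `1 - x + c` shrinks by the factor `E`
until `x` reaches `1`. The floor formula for `n₁` is the first time `c E ^ n` exceeds `x* + c`,
and `n₂ - n₁ + 1` is the first time `E ^ k` exceeds `(1 - π₀ n₁ + c) / c`.
-/

open Real

section GeometricBounds

variable {α : Type*} [Semiring α] [LinearOrder α] [IsOrderedRing α] {v : ℕ → α} {r : α}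

theorem min_pow_mul_le_of_forall_min_mul_le {L : α} (hL : 0 ≤ L) (hr : 1 ≤ r)
    (hv : ∀ n, min L (r * v n) ≤ v (n + 1)) (n : ℕ) : min L (r ^ n * v 0) ≤ v n := by
  induction n with
  | zero => simp
  | succ n ih =>
    have hr0 : 0 ≤ r := zero_le_one.trans hr
    calc min L (r ^ (n + 1) * v 0)
        ≤ min L (r * min L (r ^ n * v 0)) := by
          rw [mul_min_of_nonneg _ _ hr0, pow_succ', mul_assoc]
          exact le_min (min_le_left _ _)
            (le_min ((min_le_left _ _).trans (le_mul_of_one_le_left hL hr)) (min_le_right _ _))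
      _ ≤ min L (r * v n) := by gcongr
      _ ≤ v (n + 1) := hv n

theorem le_max_pow_mul_of_forall_le_max_mul {c : α} (hc : 0 ≤ c) (hr0 : 0 ≤ r) (hr1 : r ≤ 1)
    (hv : ∀ n, v (n + 1) ≤ max c (r * v n)) (n : ℕ) : v n ≤ max c (r ^ n * v 0) := by
  induction n with
  | zero => simp
  | succ n ih =>
    calc v (n + 1) ≤ max c (r * v n) := hv n
      _ ≤ max c (r * max c (r ^ n * v 0)) := by gcongr
      _ ≤ max c (r ^ (n + 1) * v 0) := by
          rw [mul_max_of_nonneg _ _ hr0, pow_succ', mul_assoc]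
          exact max_le (le_max_left _ _)
            (max_le ((mul_le_of_le_one_left hc hr1).trans (le_max_left _ _)) (le_max_right _ _))

end GeometricBounds

theorem lt_exp_mul_of_one_add_floor_le {ε a : ℝ} {n : ℕ} (hε : 0 < ε) (ha : 0 < a)
    (hn : 1 + ⌊(1 / ε) * log a⌋ ≤ (n : ℤ)) : a < exp (n * ε) := by
  have hlt : (1 / ε) * log a < n := by
    have := Int.lt_floor_add_one ((1 / ε) * log a)
    have hn' : (1 : ℝ) + ⌊(1 / ε) * log a⌋ ≤ n := by exact_mod_cast hn
    linarith
  rw [← log_lt_iff_lt_exp ha]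
  rwa [one_div, inv_mul_lt_iff₀ hε, mul_comm] at hlt

noncomputable def piStep (ε δ x : ℝ) : ℝ :=
  min (min (exp ε * x + δ) (1 - exp (-ε) * (1 - x - δ))) 1

noncomputable def crossover (ε δ : ℝ) : ℝ := (1 - δ) / (exp ε + 1)

/-- `-offset ε δ` and `1 + offset ε δ` are the fixed points of the affine maps
`x ↦ exp ε * x + δ` and `x ↦ 1 - exp (-ε) * (1 - x - δ)`. -/
noncomputable def offset (ε δ : ℝ) : ℝ := δ / (exp ε - 1)

section Step

variable {ε δ : ℝ}

theorem piStep_le_one (x : ℝ) : piStep ε δ x ≤ 1 := min_le_right _ _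

theorem piStep_monotone : Monotone (piStep ε δ) := fun x y hxy => by
  unfold piStep; gcongr

theorem offset_pos (hε : 0 < ε) (hδ : 0 < δ) : 0 < offset ε δ :=
  div_pos hδ (sub_pos.2 (one_lt_exp_iff.2 hε))

theorem offset_nonneg (hε : 0 < ε) (hδ : 0 ≤ δ) : 0 ≤ offset ε δ :=
  div_nonneg hδ (sub_pos.2 (one_lt_exp_iff.2 hε)).le

theorem crossover_nonneg (hδ : δ ≤ 1) : 0 ≤ crossover ε δ :=
  div_nonneg (sub_nonneg.2 hδ) (by positivity)

theorem exp_mul_add_offset (hε : 0 < ε) (x : ℝ) :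
    exp ε * x + δ + offset ε δ = exp ε * (x + offset ε δ) := by
  have := sub_pos.2 (one_lt_exp_iff.2 hε)
  unfold offset; field_simp; ring

theorem exp_neg_mul_add_offset (hε : 0 < ε) (x : ℝ) :
    exp (-ε) * (1 - x - δ) + offset ε δ = exp (-ε) * (1 - x + offset ε δ) := by
  have := sub_pos.2 (one_lt_exp_iff.2 hε)
  unfold offset; rw [exp_neg]; field_simp; ring

theorem add_offset_div_offset (hε : 0 < ε) (hδ : δ ≠ 0) (x : ℝ) :
    (x + offset ε δ) / offset ε δ = 1 + ((exp ε - 1) / δ) * x := by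
  have := (sub_pos.2 (one_lt_exp_iff.2 hε)).ne'
  unfold offset
  field_simp
  ring

theorem crossover_add_offset_div_offset (hε : 0 < ε) (hδ : δ ≠ 0) :
    (crossover ε δ + offset ε δ) / offset ε δ = (exp ε + 2 * δ - 1) / ((exp ε + 1) * δ) := by
  rw [add_offset_div_offset hε hδ]
  have := (sub_pos.2 (one_lt_exp_iff.2 hε)).ne'
  unfold crossover
  field_simp
  ring

theorem piStep_of_le_crossover (hε : 0 < ε) (hδ : δ ≤ 1) {x : ℝ} (hx : x ≤ crossover ε δ) :
    piStep ε δ x = exp ε * x + δ := by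
  have hE : 1 < exp ε := one_lt_exp_iff.2 hε
  have hx' : x * (exp ε + 1) ≤ 1 - δ := (le_div_iff₀ (by positivity)).1 hx
  have hg : exp ε * x + δ ≤ 1 - exp (-ε) * (1 - x - δ) := by
    rw [exp_neg, ← sub_nonneg]
    have hdiff : 1 - (exp ε)⁻¹ * (1 - x - δ) - (exp ε * x + δ) =
        (exp ε - 1) * (1 - δ - x * (exp ε + 1)) / exp ε := by field_simp; ring
    rw [hdiff]
    exact div_nonneg (mul_nonneg (by linarith) (by linarith)) (exp_pos ε).le
  have hone : exp ε * x + δ ≤ 1 := by nlinarith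
  rw [piStep, min_eq_left hg, min_eq_left hone]

theorem piStep_of_crossover_le (hε : 0 < ε) {x : ℝ} (hx : crossover ε δ ≤ x) :
    piStep ε δ x = min (1 - exp (-ε) * (1 - x - δ)) 1 := by
  have hE : 1 < exp ε := one_lt_exp_iff.2 hε
  have hx' : 1 - δ ≤ x * (exp ε + 1) := (div_le_iff₀ (by positivity)).1 hx
  have hg : 1 - exp (-ε) * (1 - x - δ) ≤ exp ε * x + δ := by
    rw [exp_neg, ← sub_nonneg]
    have hdiff : exp ε * x + δ - (1 - (exp ε)⁻¹ * (1 - x - δ)) =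
        (exp ε - 1) * (x * (exp ε + 1) - (1 - δ)) / exp ε := by field_simp; ring
    rw [hdiff]
    exact div_nonneg (mul_nonneg (by linarith) (by linarith)) (exp_pos ε).le
  rw [piStep, min_eq_right hg]

theorem min_crossover_add_offset_le (hε : 0 < ε) (hδ0 : 0 ≤ δ) (hδ1 : δ ≤ 1) (x : ℝ) :
    min (crossover ε δ + offset ε δ) (exp ε * (x + offset ε δ)) ≤ piStep ε δ x + offset ε δ := by
  rcases le_total x (crossover ε δ) with hx | hx
  · rw [piStep_of_le_crossover hε hδ1 hx, exp_mul_add_offset hε]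
    exact min_le_right _ _
  · have hpos : 0 ≤ crossover ε δ + offset ε δ :=
      add_nonneg (crossover_nonneg hδ1) (offset_nonneg hε hδ0)
    calc min (crossover ε δ + offset ε δ) (exp ε * (x + offset ε δ))
        ≤ exp ε * (crossover ε δ + offset ε δ) :=
          (min_le_left _ _).trans (le_mul_of_one_le_left hpos (one_le_exp hε.le))
      _ = piStep ε δ (crossover ε δ) + offset ε δ := by
          rw [piStep_of_le_crossover hε hδ1 le_rfl, exp_mul_add_offset hε]
      _ ≤ piStep ε δ x + offset ε δ := by gcongr; exact piStep_monotone hx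

theorem crossover_le_piStep (hε : 0 < ε) (hδ0 : 0 ≤ δ) (hδ1 : δ ≤ 1) {x : ℝ}
    (hx : crossover ε δ ≤ x) : crossover ε δ ≤ piStep ε δ x := by
  refine le_trans ?_ (piStep_monotone hx)
  rw [piStep_of_le_crossover hε hδ1 le_rfl]
  exact le_add_of_le_of_nonneg (le_mul_of_one_le_left (crossover_nonneg hδ1) (one_le_exp hε.le)) hδ0

theorem one_sub_piStep_add_offset_le (hε : 0 < ε) {x : ℝ} (hx : crossover ε δ ≤ x) :
    1 - piStep ε δ x + offset ε δ ≤ max (offset ε δ) (exp (-ε) * (1 - x + offset ε δ)) := by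
  rw [piStep_of_crossover_le hε hx, ← exp_neg_mul_add_offset hε]
  rcases min_cases (1 - exp (-ε) * (1 - x - δ)) 1 with ⟨h, -⟩ | ⟨h, -⟩ <;> rw [h]
  · exact le_max_of_le_right (by linarith)
  · exact le_max_of_le_left (by linarith)

end Step

section Iteration

variable {ε δ : ℝ} {π₀ : ℕ → ℝ} (hrec : ∀ n, π₀ (n + 1) = piStep ε δ (π₀ n))
include hrec

theorem crossover_le_of_lt_offset_mul_exp (hε : 0 < ε) (hδ0 : 0 ≤ δ) (hδ1 : δ ≤ 1)
    (h0 : π₀ 0 = 0) {n : ℕ} (hn : crossover ε δ + offset ε δ < offset ε δ * exp (n * ε)) :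
    crossover ε δ ≤ π₀ n := by
  have hmin := min_pow_mul_le_of_forall_min_mul_le (v := fun n => π₀ n + offset ε δ)
    (add_nonneg (crossover_nonneg hδ1) (offset_nonneg hε hδ0)) (one_le_exp hε.le)
    (fun n => by rw [hrec]; exact min_crossover_add_offset_le hε hδ0 hδ1 _) n
  rw [h0, zero_add, ← exp_nat_mul, mul_comm, min_eq_left hn.le] at hmin
  linarith

theorem one_le_of_crossover_le (hε : 0 < ε) (hδ0 : 0 ≤ δ) (hδ1 : δ ≤ 1) {n k : ℕ}
    (hn : crossover ε δ ≤ π₀ n) (hk : 1 - π₀ n + offset ε δ < offset ε δ * exp (k * ε)) :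
    1 ≤ π₀ (n + k) := by
  have hinv : ∀ j, crossover ε δ ≤ π₀ (n + j) := fun j => by
    induction j with
    | zero => exact hn
    | succ j ih => rw [← add_assoc, hrec]; exact crossover_le_piStep hε hδ0 hδ1 ih
  have hmax := le_max_pow_mul_of_forall_le_max_mul (v := fun j => 1 - π₀ (n + j) + offset ε δ)
    (offset_nonneg hε hδ0) (exp_pos _).le (exp_le_one_iff.2 (neg_nonpos.2 hε.le))
    (fun j => by rw [← add_assoc, hrec]; exact one_sub_piStep_add_offset_le hε (hinv j)) k
  have hlt : exp (-ε) ^ k * (1 - π₀ n + offset ε δ) < offset ε δ := by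
    rwa [← exp_nat_mul, mul_neg, exp_neg, inv_mul_lt_iff₀ (exp_pos _), mul_comm]
  simp only [add_zero] at hmax
  rw [max_eq_left hlt.le] at hmax
  linarith

end Iteration

theorem pi_opt_one_after_second_crossover
    (ε δ : ℝ) (hε : 0 < ε) (hδ0 : 0 < δ) (hδ1 : δ < 1)
    (π₀ : ℕ → ℝ) (h0 : π₀ 0 = 0)
    (hrec : ∀ n, π₀ (n + 1) =
      min (min (exp ε * π₀ n + δ) (1 - exp (-ε) * (1 - π₀ n - δ))) 1)
    (n₁ n₂ : ℕ)
    (hn₁ : (n₁ : ℤ) = 1 + ⌊(1 / ε) * Real.log ((exp ε + 2 * δ - 1) / ((exp ε + 1) * δ))⌋)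
    (hn₂ : (n₂ : ℤ) = (n₁ : ℤ) +
      ⌊(1 / ε) * Real.log (1 + ((exp ε - 1) / δ) * (1 - π₀ n₁))⌋) :
    ∀ n : ℕ, n₂ < n → π₀ n = 1 := by
  have hstep : ∀ n, π₀ (n + 1) = piStep ε δ (π₀ n) := hrec
  have hE : 1 < exp ε := one_lt_exp_iff.2 hε
  have hc := offset_pos hε hδ0
  have hle : ∀ n, π₀ n ≤ 1
    | 0 => h0 ▸ zero_le_one
    | n + 1 => hstep n ▸ piStep_le_one _
  have hn₁_crossover : crossover ε δ ≤ π₀ n₁ := by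
    refine crossover_le_of_lt_offset_mul_exp hstep hε hδ0.le hδ1.le h0 ?_
    rw [← div_lt_iff₀' hc, crossover_add_offset_div_offset hε hδ0.ne']
    exact lt_exp_mul_of_one_add_floor_le hε (div_pos (by linarith) (by positivity)) hn₁.ge
  have hB : 1 ≤ 1 + ((exp ε - 1) / δ) * (1 - π₀ n₁) :=
    le_add_of_nonneg_right (mul_nonneg (by positivity) (sub_nonneg.2 (hle n₁)))
  have hfloor := Int.floor_nonneg.2 (mul_nonneg (one_div_pos.2 hε).le (log_nonneg hB))
  intro n hn
  obtain ⟨k, rfl⟩ : ∃ k, n = n₁ + k := ⟨n - n₁, by omega⟩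
  refine le_antisymm (hle _) (one_le_of_crossover_le hstep hε hδ0.le hδ1.le hn₁_crossover ?_)
  rw [← div_lt_iff₀' hc, add_offset_div_offset hε hδ0.ne']
  exact lt_exp_mul_of_one_add_floor_le hε (by linarith) (by omega)
end

section
/- Let ε > 0, δ ∈ (0,1), and k = ⌈(1/ε)·ln((e^ε + 2δ − 1)/((e^ε + 1)δ))⌉. Let X be a random variable on ℤ with the k-truncated symmetric geometric distribution of parameter p = 1 − e^{−ε}, i.e., P[X = x] = c·e^{−|x|ε} for |x| ≤ k, with c = (1 − e^{−ε})/(1 + e^{−ε} − 2e^{−(k+1)ε}). Then P[X = k] ≤ δ. -/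
/-!
Write `s = e^ε` and `u = e^{-kε}`. Clearing `s` from the normalising constant, the tail mass is
`(s - 1) u / (s + 1 - 2u)`, an increasing function of `u`, and it is at most `δ` as soon as
`u (s + 2δ - 1) ≤ (s + 1) δ`, i.e. `e^{kε} ≥ (s + 2δ - 1) / ((s + 1) δ)`. The ceiling in the
definition of `k` is exactly what guarantees this.
-/

open Real

theorem exp_neg_mul_le_inv_of_log_le {ε A x : ℝ} (hε : 0 < ε) (hA : 0 < A)
    (hx : 1 / ε * log A ≤ x) : exp (-x * ε) ≤ A⁻¹ := by
  have hlog : log A ≤ x * ε := by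
    rwa [one_div, inv_mul_le_iff₀ hε, mul_comm] at hx
  calc exp (-x * ε) = (exp (x * ε))⁻¹ := by rw [neg_mul, exp_neg]
    _ ≤ A⁻¹ := inv_anti₀ hA (by simpa [exp_log hA] using exp_le_exp.mpr hlog)

theorem tsgd_tail_mass_le_of_mul_le {s u δ : ℝ} (hs : 1 < s) (hδ : 0 < δ)
    (h : u * (s + 2 * δ - 1) ≤ (s + 1) * δ) :
    (1 - s⁻¹) / (1 + s⁻¹ - 2 * (u * s⁻¹)) * u ≤ δ := by
  -- `2u (s + 2δ - 1) ≤ 2 (s + 1) δ < (s + 1) (s + 2δ - 1)`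
  have hden : 0 < s + 1 - 2 * u := by nlinarith
  have hform : (1 - s⁻¹) / (1 + s⁻¹ - 2 * (u * s⁻¹)) * u = (s - 1) * u / (s + 1 - 2 * u) := by
    field_simp
  rw [hform, div_le_iff₀ hden]
  linarith

theorem tsgd_tail_mass_le_delta_general
    (ε δ : ℝ) (hε : 0 < ε) (hδ0 : 0 < δ)
    (k : ℤ)
    (hk : k = ⌈(1 / ε) * Real.log ((exp ε + 2 * δ - 1) / ((exp ε + 1) * δ))⌉) :
    ((1 - exp (-ε)) / (1 + exp (-ε) - 2 * exp (-((k : ℝ) + 1) * ε))) *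
      exp (-(k : ℝ) * ε) ≤ δ := by
  have hs : 1 < exp ε := one_lt_exp_iff.mpr hε
  have hnum : 0 < exp ε + 2 * δ - 1 := by linarith
  have hu : exp (-(k : ℝ) * ε) ≤ ((exp ε + 2 * δ - 1) / ((exp ε + 1) * δ))⁻¹ :=
    exp_neg_mul_le_inv_of_log_le hε (by positivity) (hk ▸ Int.le_ceil _)
  rw [inv_div, le_div_iff₀ hnum] at hu
  have hsplit : exp (-((k : ℝ) + 1) * ε) = exp (-(k : ℝ) * ε) * (exp ε)⁻¹ := by
    rw [← exp_neg, ← exp_add]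
    ring_nf
  rw [hsplit, exp_neg]
  exact tsgd_tail_mass_le_of_mul_le hs hδ0 hu

theorem tsgd_tail_mass_le_delta
    (ε δ : ℝ) (hε : 0 < ε) (hδ0 : 0 < δ) (hδ1 : δ < 1)
    (k : ℤ)
    (hk : k = ⌈(1 / ε) * Real.log ((exp ε + 2 * δ - 1) / ((exp ε + 1) * δ))⌉) :
    ((1 - exp (-ε)) / (1 + exp (-ε) - 2 * exp (-((k : ℝ) + 1) * ε))) *
      exp (-(k : ℝ) * ε) ≤ δ :=
  tsgd_tail_mass_le_delta_general ε δ hε hδ0 k hk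
end

section
/- Let ε > 0, δ ∈ (0,1), k = ⌈(1/ε)·ln((e^ε + 2δ − 1)/((e^ε + 1)δ))⌉, and let X follow the k-TSGD with mass P[X = x] = c·e^{−|x|ε} for |x| ≤ k, where c = (1−e^{−ε})/(1 + e^{−ε} − 2e^{−(k+1)ε}). For any μ ∈ ℤ, let Y = μ + X and Y' = (μ+1) + X. Then for every set S ⊆ ℤ: P[Y' ∈ S] ≤ e^ε·P[Y ∈ S] + δ and P[Y ∈ S] ≤ e^ε·P[Y' ∈ S] + δ. (The truncated geometric mechanism is (ε,δ)-differentially private for sensitivity-1 integer queries.) -/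
/-!
Write `f` for the mass function and `c` for its normalising constant. Inside the support one step
away from the centre divides the mass by `e^ε`, so `f x ≤ e^ε f (x + 1)` can fail only at `x = k`,
and `f (x + 1) ≤ e^ε f x` only at `x + 1 = -k`, where the mass is `c e^{-kε}`. The choice of `k` is
exactly what makes `c e^{-kε} ≤ δ`, so summing the pointwise bounds over `S` gives both
inequalities, the one defect point contributing at most `δ`.
-/

open Real

/-- Mass function of the `k`-truncated symmetric geometric distribution with
parameter `p = 1 - e^{-ε}`: `P[X = x] = c·e^{-|x|ε}` for `|x| ≤ k`, `0` otherwise. -/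
noncomputable def tsgdMass (ε : ℝ) (k : ℤ) (x : ℤ) : ℝ :=
  if |x| ≤ k then
    ((1 - exp (-ε)) / (1 + exp (-ε) - 2 * exp (-((k : ℝ) + 1) * ε))) *
      exp (-(|x| : ℝ) * ε)
  else 0

theorem tsum_subtype_le_mul_add_of_le {α : Type*} {F G d : α → ℝ} {a δ : ℝ}
    (hF : Summable F) (hG : Summable G) (hd : HasSum d δ) (hd0 : ∀ y, 0 ≤ d y)
    (h : ∀ y, F y ≤ a * G y + d y) (S : Set α) :
    ∑' y : S, F y ≤ a * ∑' y : S, G y + δ := by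
  have hGS : Summable (S.indicator G) := hG.indicator S
  have hle : ∀ y, S.indicator F y ≤ a * S.indicator G y + d y := by
    intro y
    by_cases hy : y ∈ S
    · simpa only [Set.indicator_of_mem hy] using h y
    · simpa only [Set.indicator_of_notMem hy, mul_zero, zero_add] using hd0 y
  rw [tsum_subtype S F, tsum_subtype S G, ← tsum_mul_left, ← hd.tsum_eq,
    ← (hGS.mul_left a).tsum_add hd.summable]
  exact (hF.indicator S).tsum_le_tsum hle ((hGS.mul_left a).add hd.summable)

namespace Tsgd

variable {ε δ : ℝ} {k : ℤ}

theorem one_le_exp_add_two_mul_sub_one_div (hε : 0 ≤ ε) (hδ0 : 0 < δ) (hδ1 : δ ≤ 1) :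
    1 ≤ (exp ε + 2 * δ - 1) / ((exp ε + 1) * δ) := by
  have hE : 1 ≤ exp ε := one_le_exp hε
  rw [one_le_div (by positivity)]
  nlinarith

theorem exp_neg_mul_mul_le (hε : 0 < ε) (hδ0 : 0 < δ)
    (hk : (1 / ε) * log ((exp ε + 2 * δ - 1) / ((exp ε + 1) * δ)) ≤ k) :
    exp (-(k : ℝ) * ε) * (exp ε + 2 * δ - 1) ≤ (exp ε + 1) * δ := by
  have hden : 0 < (exp ε + 1) * δ := by positivity
  have hnum : 0 < exp ε + 2 * δ - 1 := by linarith [one_lt_exp_iff.2 hε]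
  have hlog : log ((exp ε + 2 * δ - 1) / ((exp ε + 1) * δ)) ≤ k * ε := by
    rwa [one_div_mul_eq_div, div_le_iff₀ hε] at hk
  have hexp := (div_le_iff₀ hden).1 ((log_le_iff_le_exp (div_pos hnum hden)).1 hlog)
  calc exp (-(k : ℝ) * ε) * (exp ε + 2 * δ - 1)
      ≤ exp (-(k : ℝ) * ε) * (exp (k * ε) * ((exp ε + 1) * δ)) := by gcongr
    _ = (exp ε + 1) * δ := by rw [← mul_assoc, ← exp_add]; simp

noncomputable def const (ε : ℝ) (k : ℤ) : ℝ :=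
  (1 - exp (-ε)) / (1 + exp (-ε) - 2 * exp (-((k : ℝ) + 1) * ε))

theorem mass_of_abs_le {x : ℤ} (hx : |x| ≤ k) :
    tsgdMass ε k x = const ε k * exp (-(|x| : ℝ) * ε) := if_pos hx

theorem mass_of_lt_abs {x : ℤ} (hx : k < |x|) : tsgdMass ε k x = 0 := if_neg hx.not_ge

theorem const_denom_pos (hε : 0 < ε) (hk : 0 ≤ k) :
    0 < 1 + exp (-ε) - 2 * exp (-((k : ℝ) + 1) * ε) := by
  have hq : exp (-ε) < 1 := exp_lt_one_iff.2 (neg_neg_of_pos hε)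
  have hqk : exp (-((k : ℝ) + 1) * ε) ≤ exp (-ε) := by
    gcongr
    nlinarith [(Int.cast_nonneg_iff.2 hk : (0 : ℝ) ≤ k)]
  linarith

theorem const_nonneg (hε : 0 < ε) (hk : 0 ≤ k) : 0 ≤ const ε k :=
  div_nonneg (by linarith [exp_lt_one_iff.2 (neg_neg_of_pos hε)]) (const_denom_pos hε hk).le

theorem mass_nonneg (hε : 0 < ε) (x : ℤ) : 0 ≤ tsgdMass ε k x := by
  rcases le_or_gt |x| k with hx | hx
  · rw [mass_of_abs_le hx]
    exact mul_nonneg (const_nonneg hε ((abs_nonneg x).trans hx)) (exp_pos _).le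
  · rw [mass_of_lt_abs hx]

theorem summable_mass : Summable (tsgdMass ε k) := by
  refine summable_of_hasFiniteSupport ((Set.finite_Icc (-k) k).subset fun x hx => ?_)
  by_contra hxk
  exact hx (mass_of_lt_abs (by rw [Set.mem_Icc, ← abs_le] at hxk; omega))

theorem mass_le_exp_mul (hε : 0 < ε) {a b : ℤ} (hab : |b| ≤ |a| + 1) (hb : |a| ≤ k → |b| ≤ k) :
    tsgdMass ε k a ≤ exp ε * tsgdMass ε k b := by
  rcases le_or_gt |a| k with ha | ha
  · have hb := hb ha
    have hexp : exp (-(|a| : ℝ) * ε) ≤ exp ε * exp (-(|b| : ℝ) * ε) := by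
      rw [← exp_add]
      gcongr
      have : ((|b| : ℤ) : ℝ) ≤ (|a| : ℤ) + 1 := by exact_mod_cast hab
      push_cast at this
      nlinarith
    rw [mass_of_abs_le ha, mass_of_abs_le hb, mul_left_comm]
    exact mul_le_mul_of_nonneg_left hexp (const_nonneg hε ((abs_nonneg b).trans hb))
  · rw [mass_of_lt_abs ha]
    exact mul_nonneg (exp_pos ε).le (mass_nonneg hε b)

theorem mass_le_of_abs_eq (hε : 0 < ε) (hk : 0 ≤ k)
    (hkδ : exp (-(k : ℝ) * ε) * (exp ε + 2 * δ - 1) ≤ (exp ε + 1) * δ)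
    {a : ℤ} (ha : |a| = k) : tsgdMass ε k a ≤ δ := by
  have hqE : exp (-ε) * exp ε = 1 := by rw [← exp_add]; simp
  have hsplit : exp (-((k : ℝ) + 1) * ε) = exp (-(k : ℝ) * ε) * exp (-ε) := by
    rw [← exp_add]; ring_nf
  rw [mass_of_abs_le ha.le, const, div_mul_eq_mul_div, div_le_iff₀ (const_denom_pos hε hk),
    ← Int.cast_abs, ha, hsplit]
  linear_combination exp (-ε) * hkδ + (δ - exp (-(k : ℝ) * ε)) * hqE

theorem mass_le_exp_mul_succ_add_single (hε : 0 < ε) (hk : 0 ≤ k)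
    (hkδ : exp (-(k : ℝ) * ε) * (exp ε + 2 * δ - 1) ≤ (exp ε + 1) * δ) (x : ℤ) :
    tsgdMass ε k x ≤ exp ε * tsgdMass ε k (x + 1) + (Pi.single k δ : ℤ → ℝ) x := by
  rcases eq_or_ne x k with hx | hx
  · rw [hx, Pi.single_eq_same]
    have := mul_nonneg (exp_pos ε).le (mass_nonneg hε (k := k) (k + 1))
    linarith [mass_le_of_abs_eq hε hk hkδ (abs_of_nonneg hk)]
  · rw [Pi.single_eq_of_ne hx, add_zero]
    exact mass_le_exp_mul hε (by grind) (by grind)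

theorem mass_succ_le_exp_mul_add_single (hε : 0 < ε) (hk : 0 ≤ k)
    (hkδ : exp (-(k : ℝ) * ε) * (exp ε + 2 * δ - 1) ≤ (exp ε + 1) * δ) (x : ℤ) :
    tsgdMass ε k (x + 1) ≤ exp ε * tsgdMass ε k x + (Pi.single (-k) δ : ℤ → ℝ) (x + 1) := by
  rcases eq_or_ne (x + 1) (-k) with hx | hx
  · rw [hx, Pi.single_eq_same]
    have := mul_nonneg (exp_pos ε).le (mass_nonneg hε (k := k) x)
    linarith [mass_le_of_abs_eq hε hk hkδ (by rw [abs_neg, abs_of_nonneg hk])]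
  · rw [Pi.single_eq_of_ne hx, add_zero]
    exact mass_le_exp_mul hε (by grind) (by grind)

end Tsgd

open Tsgd in
theorem truncated_geometric_mechanism_dp
    (ε δ : ℝ) (hε : 0 < ε) (hδ0 : 0 < δ) (hδ1 : δ < 1)
    (k : ℤ)
    (hk : k = ⌈(1 / ε) * Real.log ((exp ε + 2 * δ - 1) / ((exp ε + 1) * δ))⌉)
    (μ : ℤ) :
    ∀ S : Set ℤ,
      (∑' y : S, tsgdMass ε k ((y : ℤ) - (μ + 1))) ≤
        exp ε * (∑' y : S, tsgdMass ε k ((y : ℤ) - μ)) + δ ∧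
      (∑' y : S, tsgdMass ε k ((y : ℤ) - μ)) ≤
        exp ε * (∑' y : S, tsgdMass ε k ((y : ℤ) - (μ + 1))) + δ := by
  have hk0 : 0 ≤ k := by
    rw [hk]
    exact Int.ceil_nonneg <| mul_nonneg (by positivity) <|
      log_nonneg (one_le_exp_add_two_mul_sub_one_div hε.le hδ0 hδ1.le)
  have hkδ := exp_neg_mul_mul_le (k := k) hε hδ0 (by rw [hk]; exact Int.le_ceil _)
  have hshift (ν : ℤ) : Summable fun y => tsgdMass ε k (y - ν) :=
    summable_mass.comp_injective (sub_left_injective (b := ν))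
  have hsingle (ν w : ℤ) : HasSum (fun y => (Pi.single w δ : ℤ → ℝ) (y - ν)) δ := by
    simpa only [Function.comp_def, Equiv.subRight_apply] using
      (Equiv.subRight ν).hasSum_iff.2 (hasSum_pi_single w δ)
  have hsingle0 (ν w y : ℤ) : 0 ≤ (Pi.single w δ : ℤ → ℝ) (y - ν) := by
    rw [Pi.single_apply]; split_ifs <;> linarith
  have hsucc (y : ℤ) : y - (μ + 1) + 1 = y - μ := by ring
  intro S
  constructor
  · refine tsum_subtype_le_mul_add_of_le (hshift _) (hshift _) (hsingle (μ + 1) k)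
      (hsingle0 _ _) (fun y => ?_) S
    simpa only [hsucc] using mass_le_exp_mul_succ_add_single hε hk0 hkδ (y - (μ + 1))
  · refine tsum_subtype_le_mul_add_of_le (hshift _) (hshift _) (hsingle μ (-k))
      (hsingle0 _ _) (fun y => ?_) S
    simpa only [hsucc] using mass_succ_le_exp_mul_add_single hε hk0 hkδ (y - (μ + 1))
end

section
/- Let ε > 0, μ ∈ ℤ, k ≥ 1, and let Y = μ + X where X follows the k-TSGD with P[X = x] = c·e^{−|x|ε} for |x| ≤ k, c = (1−e^{−ε})/(1+e^{−ε}−2e^{−(k+1)ε}). Then for y ∈ ℤ with μ ≤ y ≤ μ + k, P[Y ≥ y] = ((e^{(μ+k+1−y)ε} − 1)/(e^ε − 1))·c·e^{−kε}, and for μ − k ≤ y ≤ μ − 1, P[Y ≥ y] = 1 − ((e^{(k+y−μ)ε} − 1)/(e^ε − 1))·c·e^{−kε}; furthermore P[Y ≥ y] = 1 for y ≤ μ − k and P[Y ≥ y] = 0 for y > μ + k. -/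
open Real

/-!
On `[0, k]` the mass is `c e^{-zε}`, so every upper tail `P[X ≥ m]`, `0 ≤ m`, is a finite
geometric sum. The symmetry `x ↦ -x` turns the lower tail `P[X ≤ -m]` into `P[X ≥ m]`; hence
the total mass is `P[X ≥ 0] + P[X ≥ 1]`, which equals `1` for the given `c`, and for `m ≤ 0`
we get `P[X ≥ m] = 1 - P[X ≥ 1 - m]`.
-/

open Finset

theorem tsum_subtype_le_eq_sum_Icc {M : Type*} [AddCommMonoid M] [TopologicalSpace M]
    {f : ℤ → M} {a b : ℤ} (hf : ∀ z ∉ Icc a b, f z = 0) (m : ℤ) :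
    ∑' x : {z : ℤ // m ≤ z}, f x = ∑ z ∈ Icc (max m a) b, f z := by
  rw [show (∑' x : {z : ℤ // m ≤ z}, f x) = ∑' x : Set.Ici m, f x from rfl,
    _root_.tsum_subtype, tsum_eq_sum (s := Icc (max m a) b)]
  · refine sum_congr rfl fun z hz => Set.indicator_of_mem ?_ f
    simp only [mem_Icc, max_le_iff] at hz
    exact hz.1.1
  · intro z hz
    by_cases hmz : z ∈ Set.Ici m
    · rw [Set.indicator_of_mem hmz]
      rw [Set.mem_Ici] at hmz
      exact hf z (by simp only [mem_Icc, max_le_iff] at hz ⊢; omega)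
    · exact Set.indicator_of_notMem hmz f

theorem sum_Icc_comp_neg {M : Type*} [AddCommMonoid M] (f : ℤ → M) (a b : ℤ) :
    ∑ z ∈ Icc a b, f (-z) = ∑ z ∈ Icc (-b) (-a), f z :=
  sum_nbij' (fun z => -z) (fun z => -z) (fun z hz => by simp only [mem_Icc] at hz ⊢; omega)
    (fun z hz => by simp only [mem_Icc] at hz ⊢; omega) (fun z _ => neg_neg z)
    (fun z _ => neg_neg z) (fun z _ => rfl)

theorem sum_Icc_sub_one_add_sum_Icc {M : Type*} [AddCommMonoid M] (f : ℤ → M) {a b c : ℤ}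
    (hab : a ≤ b) (hbc : b ≤ c + 1) :
    ∑ z ∈ Icc a (b - 1), f z + ∑ z ∈ Icc b c, f z = ∑ z ∈ Icc a c, f z := by
  rw [← sum_union <| disjoint_left.mpr fun z hz₁ hz₂ => by
    simp only [mem_Icc] at hz₁ hz₂; omega]
  congr 1
  ext z
  simp only [mem_Icc, mem_union]
  omega

theorem sum_Icc_exp_neg_mul {ε : ℝ} (hε : ε ≠ 0) (k : ℤ) :
    ∀ m ≤ k + 1, ∑ z ∈ Icc m k, exp (-(z : ℝ) * ε) =
      (exp (((k : ℝ) + 1 - m) * ε) - 1) / (exp ε - 1) * exp (-(k : ℝ) * ε) := by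
  have hE : exp ε - 1 ≠ 0 := sub_ne_zero.mpr fun h => hε ((exp_eq_one_iff ε).mp h)
  refine Int.leInductionDown ?_ fun m hm ih => ?_
  · simp
  · rw [← insert_Icc_add_one_left_eq_Icc (by omega), sub_add_cancel,
      sum_insert (by simp), ih]
    have hA : exp (-((m - 1 : ℤ) : ℝ) * ε) =
        exp (((k : ℝ) + 1 - m) * ε) * exp (-(k : ℝ) * ε) := by
      rw [← exp_add]; push_cast; ring_nf
    have hB : exp (((k : ℝ) + 1 - ((m - 1 : ℤ) : ℝ)) * ε) =
        exp (((k : ℝ) + 1 - m) * ε) * exp ε := by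
      rw [← exp_add]; push_cast; ring_nf
    rw [hA, hB]
    field_simp
    ring

noncomputable def tsgdConst (ε : ℝ) (k : ℤ) : ℝ :=
  (1 - exp (-ε)) / (1 + exp (-ε) - 2 * exp (-((k : ℝ) + 1) * ε))

section TSGD

variable {ε : ℝ} {k : ℤ}

theorem tsgdMass_of_abs_le {x : ℤ} (hx : |x| ≤ k) :
    tsgdMass ε k x = tsgdConst ε k * exp (-(|x| : ℝ) * ε) :=
  if_pos hx

theorem tsgdMass_eq_zero_of_notMem_Icc {x : ℤ} (hx : x ∉ Icc (-k) k) : tsgdMass ε k x = 0 :=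
  if_neg (by rwa [abs_le, ← mem_Icc])

theorem tsgdMass_neg (x : ℤ) : tsgdMass ε k (-x) = tsgdMass ε k x := by
  simp only [tsgdMass, abs_neg, Int.cast_neg]

theorem sum_Icc_neg_tsgdMass (m : ℤ) :
    ∑ z ∈ Icc (-k) (-m), tsgdMass ε k z = ∑ z ∈ Icc m k, tsgdMass ε k z := by
  simp only [← sum_Icc_comp_neg, tsgdMass_neg]

theorem tsum_tsgdMass_subtype_le_add (μ y : ℤ) :
    ∑' x : {z : ℤ // y ≤ μ + z}, tsgdMass ε k x =
      ∑ z ∈ Icc (max (y - μ) (-k)) k, tsgdMass ε k z := by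
  rw [show (fun z : ℤ => y ≤ μ + z) = fun z => y - μ ≤ z by ext; omega]
  exact tsum_subtype_le_eq_sum_Icc (fun _ => tsgdMass_eq_zero_of_notMem_Icc) _

theorem sum_Icc_tsgdMass_of_nonneg (hε : ε ≠ 0) {m : ℤ} (hm : 0 ≤ m) (hmk : m ≤ k + 1) :
    ∑ z ∈ Icc m k, tsgdMass ε k z =
      (exp (((k : ℝ) + 1 - m) * ε) - 1) / (exp ε - 1) * tsgdConst ε k *
        exp (-(k : ℝ) * ε) := by
  have hmass : ∀ z ∈ Icc m k, tsgdMass ε k z = tsgdConst ε k * exp (-(z : ℝ) * ε) := by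
    intro z hz
    rw [mem_Icc] at hz
    rw [tsgdMass_of_abs_le (abs_le.mpr ⟨by omega, hz.2⟩), ← Int.cast_abs,
      abs_of_nonneg (by omega)]
  rw [sum_congr rfl hmass, ← mul_sum, sum_Icc_exp_neg_mul hε k m hmk]
  ring

theorem tsgdConst_eq :
    tsgdConst ε k = (exp ε - 1) / (exp ε + 1 - 2 * exp (-(k : ℝ) * ε)) := by
  have hE : exp ε ≠ 0 := (exp_pos ε).ne'
  rw [tsgdConst, ← mul_div_mul_left _ _ hE]
  congr 1
  · rw [mul_sub, exp_neg, mul_inv_cancel₀ hE, mul_one]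
  · rw [show -((k : ℝ) + 1) * ε = -(k : ℝ) * ε + -ε by ring, exp_add, exp_neg ε]
    field_simp

theorem sum_Icc_tsgdMass (hε : 0 < ε) (hk : 0 ≤ k) :
    ∑ z ∈ Icc (-k) k, tsgdMass ε k z = 1 := by
  rw [← sum_Icc_sub_one_add_sum_Icc _ (by omega : -k ≤ 0) (by omega), zero_sub,
    sum_Icc_neg_tsgdMass, sum_Icc_tsgdMass_of_nonneg hε.ne' zero_le_one (by omega),
    sum_Icc_tsgdMass_of_nonneg hε.ne' le_rfl (by omega), tsgdConst_eq]
  have hE : 1 < exp ε := one_lt_exp_iff.mpr hε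
  have hk' : (0 : ℝ) ≤ k := by exact_mod_cast hk
  have hL : exp (-(k : ℝ) * ε) ≤ 1 := exp_le_one_iff.mpr (by nlinarith)
  have hA : exp (((k : ℝ) + 1 - 1) * ε) = (exp (-(k : ℝ) * ε))⁻¹ := by
    rw [← exp_neg]; ring_nf
  have hB : exp (((k : ℝ) + 1 - 0) * ε) = exp ε * (exp (-(k : ℝ) * ε))⁻¹ := by
    rw [← exp_neg, ← exp_add]; ring_nf
  have hD : exp ε + 1 - 2 * exp (-(k : ℝ) * ε) ≠ 0 := by linarith
  have hE1 : exp ε - 1 ≠ 0 := by linarith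
  have hL0 : exp (-(k : ℝ) * ε) ≠ 0 := (exp_pos _).ne'
  push_cast
  rw [hA, hB]
  generalize exp ε = E at *
  generalize exp (-(k : ℝ) * ε) = L at *
  calc _ = (E + 1 - 2 * L) / (E + 1 - 2 * L) := by field_simp; ring
    _ = 1 := div_self hD

theorem sum_Icc_tsgdMass_of_nonpos (hε : 0 < ε) {m : ℤ} (hm : -k ≤ m) (hm0 : m ≤ 0) :
    ∑ z ∈ Icc m k, tsgdMass ε k z =
      1 - (exp (((k : ℝ) + m) * ε) - 1) / (exp ε - 1) * tsgdConst ε k *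
        exp (-(k : ℝ) * ε) := by
  have hsplit := sum_Icc_sub_one_add_sum_Icc (tsgdMass ε k) hm (by omega : m ≤ k + 1)
  rw [sum_Icc_tsgdMass hε (by omega), ← neg_sub,
    sum_Icc_neg_tsgdMass, sum_Icc_tsgdMass_of_nonneg hε.ne' (by omega) (by omega)] at hsplit
  rw [eq_sub_of_add_eq' hsplit]
  push_cast
  ring_nf

end TSGD

theorem tsgd_tail_cdf
    (ε : ℝ) (hε : 0 < ε) (μ : ℤ) (k : ℤ) (hk : 1 ≤ k) :
    ∀ y : ℤ,
      (μ ≤ y → y ≤ μ + k →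
        (∑' x : {z : ℤ // y ≤ μ + z}, tsgdMass ε k (x : ℤ)) =
          ((exp (((μ : ℝ) + k + 1 - y) * ε) - 1) / (exp ε - 1)) *
            ((1 - exp (-ε)) / (1 + exp (-ε) - 2 * exp (-((k : ℝ) + 1) * ε))) *
            exp (-(k : ℝ) * ε)) ∧
      (μ - k ≤ y → y ≤ μ - 1 →
        (∑' x : {z : ℤ // y ≤ μ + z}, tsgdMass ε k (x : ℤ)) =
          1 - ((exp (((k : ℝ) + y - μ) * ε) - 1) / (exp ε - 1)) *
            ((1 - exp (-ε)) / (1 + exp (-ε) - 2 * exp (-((k : ℝ) + 1) * ε))) *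
            exp (-(k : ℝ) * ε)) ∧
      (y ≤ μ - k → (∑' x : {z : ℤ // y ≤ μ + z}, tsgdMass ε k (x : ℤ)) = 1) ∧
      (μ + k < y → (∑' x : {z : ℤ // y ≤ μ + z}, tsgdMass ε k (x : ℤ)) = 0) := by
  intro y
  rw [tsum_tsgdMass_subtype_le_add]
  refine ⟨fun h₁ h₂ => ?_, fun h₁ h₂ => ?_, fun h => ?_, fun h => ?_⟩
  · rw [max_eq_left (by omega), sum_Icc_tsgdMass_of_nonneg hε.ne' (by omega) (by omega),
      tsgdConst]
    push_cast
    ring_nf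
  · rw [max_eq_left (by omega), sum_Icc_tsgdMass_of_nonpos hε (by omega) (by omega), tsgdConst]
    push_cast
    ring_nf
  · rw [max_eq_right (by omega), sum_Icc_tsgdMass hε (by omega)]
  · rw [max_eq_left (by omega), Icc_eq_empty (by omega), sum_empty]
end

section
/- Let ε > 0 and δ ∈ (0,1). Define n₁ = 1 + ⌊(1/ε)·ln((e^ε + 2δ − 1)/((e^ε + 1)δ))⌋. Then n₁ ≥ 1, for every integer n with 1 ≤ n ≤ n₁ − 1 we have δ·(e^{nε} − 1)/(e^ε − 1) ≤ (1 − δ)·(1 − e^{−ε})/(e^ε − e^{−ε}), and n₁ is the largest integer n such that δ·(e^{(n−1)ε} − 1)/(e^ε − 1) ≤ (1−δ)/(e^ε + 1). -/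
open Real

lemma crossover_key (ε δ : ℝ) (hε : 0 < ε) (hδ0 : 0 < δ) (hδ1 : δ < 1) (x : ℝ) :
    δ * (exp (x * ε) - 1) / (exp ε - 1) ≤ (1 - δ) / (exp ε + 1) ↔
      x ≤ (1 / ε) * Real.log ((exp ε + 2 * δ - 1) / ((exp ε + 1) * δ)) := by
  have hE : 1 < exp ε := by
    have := Real.exp_lt_exp.mpr hε
    simpa using this
  have h1 : 0 < exp ε - 1 := by linarith
  have h2 : 0 < exp ε + 1 := by linarith
  have hden : 0 < (exp ε + 1) * δ := by positivity
  have hnum : 0 < exp ε + 2 * δ - 1 := by linarith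
  have hA : 0 < (exp ε + 2 * δ - 1) / ((exp ε + 1) * δ) := div_pos hnum hden
  rw [div_le_div_iff₀ h1 h2]
  have step1 : δ * (exp (x * ε) - 1) * (exp ε + 1) ≤ (1 - δ) * (exp ε - 1) ↔
      exp (x * ε) ≤ (exp ε + 2 * δ - 1) / ((exp ε + 1) * δ) := by
    rw [le_div_iff₀ hden]
    constructor <;> intro h <;> nlinarith
  rw [step1, ← Real.exp_log hA, Real.exp_le_exp, Real.log_exp, ← le_div_iff₀ hε, one_div,
    div_eq_inv_mul]

theorem first_crossover_point_characterization
    (ε δ : ℝ) (hε : 0 < ε) (hδ0 : 0 < δ) (hδ1 : δ < 1)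
    (n₁ : ℤ)
    (hn₁ : n₁ = 1 + ⌊(1 / ε) * Real.log ((exp ε + 2 * δ - 1) / ((exp ε + 1) * δ))⌋) :
    1 ≤ n₁ ∧
    (∀ n : ℤ, 1 ≤ n → n ≤ n₁ - 1 →
      δ * (exp ((n : ℝ) * ε) - 1) / (exp ε - 1) ≤
        (1 - δ) * (1 - exp (-ε)) / (exp ε - exp (-ε))) ∧
    (δ * (exp (((n₁ : ℝ) - 1) * ε) - 1) / (exp ε - 1) ≤ (1 - δ) / (exp ε + 1)) ∧
    (∀ n : ℤ,
      δ * (exp (((n : ℝ) - 1) * ε) - 1) / (exp ε - 1) ≤ (1 - δ) / (exp ε + 1) →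
      n ≤ n₁) := by
  set L : ℝ := (1 / ε) * Real.log ((exp ε + 2 * δ - 1) / ((exp ε + 1) * δ)) with hL
  have hE : 1 < exp ε := by
    have := Real.exp_lt_exp.mpr hε
    simpa using this
  have hden : 0 < (exp ε + 1) * δ := by positivity
  have hLnn : 0 ≤ L := by
    apply mul_nonneg (by positivity)
    apply Real.log_nonneg
    rw [le_div_iff₀ hden]
    nlinarith
  have hRHS : (1 - δ) * (1 - exp (-ε)) / (exp ε - exp (-ε)) = (1 - δ) / (exp ε + 1) := by
    have hne : exp ε ≠ 0 := (Real.exp_pos ε).ne'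
    have hsplit : exp ε - exp (-ε) = (exp ε + 1) * (1 - exp (-ε)) := by
      rw [Real.exp_neg]
      field_simp
      ring
    have hlt : exp (-ε) < 1 := Real.exp_lt_one_iff.mpr (by linarith)
    rw [hsplit, mul_comm (exp ε + 1) _, ← div_div, mul_div_assoc,
      div_self (by linarith : (1 : ℝ) - exp (-ε) ≠ 0), mul_one]
  refine ⟨?_, ?_, ?_, ?_⟩
  · rw [hn₁]
    have : (0 : ℤ) ≤ ⌊L⌋ := Int.le_floor.mpr (by simpa using hLnn)
    omega
  · intro n hn1 hn2
    rw [hRHS]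
    apply (crossover_key ε δ hε hδ0 hδ1 _).mpr
    have : n ≤ ⌊L⌋ := by omega
    exact_mod_cast (Int.le_floor.mp this)
  · apply (crossover_key ε δ hε hδ0 hδ1 _).mpr
    have h := Int.floor_le L
    have : ((n₁ : ℝ)) - 1 = ((⌊L⌋ : ℤ) : ℝ) := by
      rw [hn₁]; push_cast; ring
    linarith [this ▸ h]
  · intro n hn
    have h := (crossover_key ε δ hε hδ0 hδ1 _).mp hn
    have : n - 1 ≤ ⌊L⌋ := Int.le_floor.mpr (by push_cast; linarith)
    omega
end

section
/- Let ε ≥ 0, δ ∈ [0,1], let π₀ be the optimal (ε,δ)-DP partition selection primitive (π₀(0)=0, π₀(n+1)=min(e^ε·π₀(n)+δ, 1−e^{−ε}(1−π₀(n)−δ), 1)). Let U be a finite set of partitions, and let M be any randomized mechanism taking histograms (n_i)_{i∈U} ∈ ℕ^U to subsets of U, such that M never outputs a partition i with n_i = 0, and such that for each i ∈ U and each pair of histograms differing only by n_i vs n_i + 1, and each set S of subsets of U, P[M ∈ S] changes by at most the (ε,δ)-DP bound. Then for every histogram (n_i)_{i∈U}, the expected output size E[|M((n_i))|] ≤ ∑_{i∈U}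 π₀(n_i). -/
/-!
Fix a histogram `D` and a partition `i`, and let `f n` be the probability that `i` is output
when `D i` is replaced by `n`. Then `f 0 = 0`, and the DP inequalities applied to the events
"`i` is output" and "`i` is not output" give `f (n + 1) ≤ e^ε f n + δ` and
`1 - f n ≤ e^ε (1 - f (n + 1)) + δ`; together with `f ≤ 1` these are exactly the three terms
of the recursion for `π₀`, so `f ≤ π₀` by induction. Summing over `i` bounds the expected
output size, which is the sum of the membership probabilities.
-/

open Real Finset

section Scalar

variable {ε δ : ℝ} {π₀ f : ℕ → ℝ}

theorem le_optimal_primitive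
    (h0 : π₀ 0 = 0)
    (hrec : ∀ n, π₀ (n + 1) =
      min (min (exp ε * π₀ n + δ) (1 - exp (-ε) * (1 - π₀ n - δ))) 1)
    (hf0 : f 0 ≤ 0) (hf1 : ∀ n, f n ≤ 1)
    (hup : ∀ n, f (n + 1) ≤ exp ε * f n + δ)
    (hdown : ∀ n, 1 - f n ≤ exp ε * (1 - f (n + 1)) + δ) :
    ∀ n, f n ≤ π₀ n := by
  intro n
  induction n with
  | zero => rw [h0]; exact hf0
  | succ n ih =>
    have hexp : exp (-ε) * exp ε = 1 := by rw [← exp_add, neg_add_cancel, exp_zero]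
    have hfirst : f (n + 1) ≤ exp ε * π₀ n + δ := by
      linarith [hup n, mul_le_mul_of_nonneg_left ih (exp_pos ε).le]
    have hsecond : f (n + 1) ≤ 1 - exp (-ε) * (1 - π₀ n - δ) := by
      have : exp (-ε) * (1 - π₀ n - δ) ≤ exp (-ε) * (exp ε * (1 - f (n + 1))) :=
        mul_le_mul_of_nonneg_left (by linarith [hdown n]) (exp_pos _).le
      rw [← mul_assoc, hexp, one_mul] at this
      linarith
    rw [hrec n]
    exact le_min (le_min hfirst hsecond) (hf1 _)

end Scalar

section Mechanism

variable {U : Type*} [Fintype U] [DecidableEq U] (P : (U → ℕ) → Finset U → ℝ)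

def memberProb (D : U → ℕ) (i : U) : ℝ :=
  ∑ T ∈ univ.filter (i ∈ ·), P D T

theorem sum_mul_card_eq_sum_memberProb (D : U → ℕ) :
    ∑ T : Finset U, P D T * (T.card : ℝ) = ∑ i : U, memberProb P D i := by
  calc ∑ T : Finset U, P D T * (T.card : ℝ)
      = ∑ T : Finset U, ∑ i ∈ T, P D T := by
        refine sum_congr rfl fun T _ => ?_
        rw [sum_const, nsmul_eq_mul, mul_comm]
    _ = ∑ i : U, memberProb P D i := by
        simp_rw [memberProb, sum_filter]
        rw [sum_comm]
        exact sum_congr rfl fun T _ => by simp [sum_ite_mem]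

variable {P}

theorem sum_not_mem_eq_one_sub_memberProb (hPsum : ∀ D, ∑ T : Finset U, P D T = 1)
    (D : U → ℕ) (i : U) :
    ∑ T ∈ univ.filter (i ∉ ·), P D T = 1 - memberProb P D i := by
  rw [← hPsum D, ← sum_filter_add_sum_filter_not univ (i ∈ ·), memberProb]
  ring

theorem memberProb_le_one (hPnonneg : ∀ D T, 0 ≤ P D T)
    (hPsum : ∀ D, ∑ T : Finset U, P D T = 1) (D : U → ℕ) (i : U) :
    memberProb P D i ≤ 1 := by
  rw [← hPsum D]
  exact sum_le_sum_of_subset_of_nonneg (filter_subset _ _) fun T _ _ => hPnonneg D T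

theorem memberProb_eq_zero
    (hEmpty : ∀ (D : U → ℕ) (i : U), D i = 0 → ∀ T : Finset U, i ∈ T → P D T = 0)
    {D : U → ℕ} {i : U} (hi : D i = 0) :
    memberProb P D i = 0 :=
  sum_eq_zero fun T hT => hEmpty D i hi T (mem_filter.1 hT).2

end Mechanism

theorem optimal_mechanism_expected_output_size_general
    (ε δ : ℝ)
    (π₀ : ℕ → ℝ) (h0 : π₀ 0 = 0)
    (hrec : ∀ n, π₀ (n + 1) =
      min (min (exp ε * π₀ n + δ) (1 - exp (-ε) * (1 - π₀ n - δ))) 1)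
    (U : Type*) [Fintype U] [DecidableEq U]
    -- `P D T` is the probability that mechanism `M` outputs the set `T ⊆ U`
    -- on input histogram `D : U → ℕ`.
    (P : (U → ℕ) → Finset U → ℝ)
    (hPnonneg : ∀ D T, 0 ≤ P D T)
    (hPsum : ∀ D, ∑ T : Finset U, P D T = 1)
    -- `M` never outputs a partition with zero users:
    (hEmpty : ∀ (D : U → ℕ) (i : U), D i = 0 → ∀ T : Finset U, i ∈ T → P D T = 0)
    -- (ε,δ)-DP on adjacent histograms, differing by +1 in one coordinate:
    (hDP : ∀ (D : U → ℕ) (i : U) (S : Finset (Finset U)),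
      (∑ T ∈ S, P (Function.update D i (D i + 1)) T) ≤
        exp ε * (∑ T ∈ S, P D T) + δ ∧
      (∑ T ∈ S, P D T) ≤
        exp ε * (∑ T ∈ S, P (Function.update D i (D i + 1)) T) + δ) :
    ∀ D : U → ℕ,
      (∑ T : Finset U, P D T * (T.card : ℝ)) ≤ ∑ i : U, π₀ (D i) := by
  intro D
  rw [sum_mul_card_eq_sum_memberProb]
  refine sum_le_sum fun i _ => ?_
  have hstep (n : ℕ) : Function.update (Function.update D i n) i (Function.update D i n i + 1)
      = Function.update D i (n + 1) := by simp
  have hDPi n S := hstep n ▸ hDP (Function.update D i n) i S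
  have hbound := le_optimal_primitive (f := fun n => memberProb P (Function.update D i n) i)
    h0 hrec (memberProb_eq_zero hEmpty (by simp)).le
    (fun n => memberProb_le_one hPnonneg hPsum _ i)
    (fun n => (hDPi n _).1)
    (fun n => by
      simpa only [sum_not_mem_eq_one_sub_memberProb hPsum] using
        (hDPi n (univ.filter (i ∉ ·))).2)
    (D i)
  simpa using hbound

theorem optimal_mechanism_expected_output_size
    (ε δ : ℝ) (hε : 0 ≤ ε) (hδ0 : 0 ≤ δ) (hδ1 : δ ≤ 1)
    (π₀ : ℕ → ℝ) (h0 : π₀ 0 = 0)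
    (hrec : ∀ n, π₀ (n + 1) =
      min (min (exp ε * π₀ n + δ) (1 - exp (-ε) * (1 - π₀ n - δ))) 1)
    (U : Type*) [Fintype U] [DecidableEq U]
    -- `P D T` is the probability that mechanism `M` outputs the set `T ⊆ U`
    -- on input histogram `D : U → ℕ`.
    (P : (U → ℕ) → Finset U → ℝ)
    (hPnonneg : ∀ D T, 0 ≤ P D T)
    (hPsum : ∀ D, ∑ T : Finset U, P D T = 1)
    -- `M` never outputs a partition with zero users:
    (hEmpty : ∀ (D : U → ℕ) (i : U), D i = 0 → ∀ T : Finset U, i ∈ T → P D T = 0)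
    -- (ε,δ)-DP on adjacent histograms, differing by +1 in one coordinate:
    (hDP : ∀ (D : U → ℕ) (i : U) (S : Finset (Finset U)),
      (∑ T ∈ S, P (Function.update D i (D i + 1)) T) ≤
        exp ε * (∑ T ∈ S, P D T) + δ ∧
      (∑ T ∈ S, P D T) ≤
        exp ε * (∑ T ∈ S, P (Function.update D i (D i + 1)) T) + δ) :
    ∀ D : U → ℕ,
      (∑ T : Finset U, P D T * (T.card : ℝ)) ≤ ∑ i : U, π₀ (D i) :=
  optimal_mechanism_expected_output_size_general ε δ π₀ h0 hrec U P hPnonneg hPsum hEmpty hDP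
end
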